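/- Let t > 0, λ > 0, η₁ > 1, η₂ > 0, and p, q > 0 with p + q = 1. Then there exist positive constants α₁ and α₂ such that |a_k − d_k| ≤ (α₁/(k+1))·d_k and |b_k − l_k| ≤ (α₂/(k+1))·l_k for all k ≥ 0, where d_0 = C₁, d_k = C₁·B₁^k e^{2k}/k^{2k+2} for k ≥ 1, l_0 = C₂, l_k = C₂·B₂^k e^{2k}/k^{2k+2} for k ≥ 1, with C₁ = (η₁λtp/(2π))·exp{η₂λtq/(η₁+η₂) − λt}, B₁ = η₁λtp, C₂ = (η₂λtq/(2π))·exp{η₁λtp/(η₁+η₂) − λt}, and B₂ = η₂λtq. -/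

import Mathlib

open Filter Asymptotics MeasureTheory

/-- `P_{n,k}` from Kou's double exponential jump model: `P_{n,n} = p^n` and, for
`1 ≤ k ≤ n−1`,
`P_{n,k} = Σ_{i=k}^{n−1} C(n−k−1, i−k) C(n,i) (η₁/(η₁+η₂))^{i−k} (η₂/(η₁+η₂))^{n−i} p^i q^{n−i}`. -/
noncomputable def Pcoef (η₁ η₂ p q : ℝ) (n k : ℕ) : ℝ :=
  if k = n then p ^ n
  else ∑ i ∈ Finset.Ico k n,
    ((n - k - 1).choose (i - k) : ℝ) * (n.choose i : ℝ) *
      (η₁ / (η₁ + η₂)) ^ (i - k) * (η₂ / (η₁ + η₂)) ^ (n - i) * p ^ i * q ^ (n - i)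

/-- `Q_{n,k}` from Kou's double exponential jump model: `Q_{n,n} = q^n` and, for
`1 ≤ k ≤ n−1`,
`Q_{n,k} = Σ_{i=k}^{n−1} C(n−k−1, i−k) C(n,i) (η₁/(η₁+η₂))^{n−i} (η₂/(η₁+η₂))^{i−k} p^{n−i} q^i`. -/
noncomputable def Qcoef (η₁ η₂ p q : ℝ) (n k : ℕ) : ℝ :=
  if k = n then q ^ n
  else ∑ i ∈ Finset.Ico k n,
    ((n - k - 1).choose (i - k) : ℝ) * (n.choose i : ℝ) *
      (η₁ / (η₁ + η₂)) ^ (n - i) * (η₂ / (η₁ + η₂)) ^ (i - k) * p ^ (n - i) * q ^ i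

/-- The Poisson weights `π_n = e^{−λt} (λt)^n / n!`. -/
noncomputable def poisCoef (lam t : ℝ) (n : ℕ) : ℝ :=
  Real.exp (-(lam * t)) * (lam * t) ^ n / (n.factorial : ℝ)

/-- `a_k = (η₁^{k+1}/k!) Σ_{n=k+1}^∞ π_n P_{n,k+1}` (the series is reindexed by
`n = m + (k+1)`, `m ≥ 0`). -/
noncomputable def aCoef (lam t η₁ η₂ p q : ℝ) (k : ℕ) : ℝ :=
  η₁ ^ (k + 1) / (k.factorial : ℝ) *
    ∑' m : ℕ, poisCoef lam t (m + (k + 1)) * Pcoef η₁ η₂ p q (m + (k + 1)) (k + 1)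

/-- `b_k = (η₂^{k+1}/k!) Σ_{n=k+1}^∞ π_n Q_{n,k+1}` (the series is reindexed by
`n = m + (k+1)`, `m ≥ 0`). -/
noncomputable def bCoef (lam t η₁ η₂ p q : ℝ) (k : ℕ) : ℝ :=
  η₂ ^ (k + 1) / (k.factorial : ℝ) *
    ∑' m : ℕ, poisCoef lam t (m + (k + 1)) * Qcoef η₁ η₂ p q (m + (k + 1)) (k + 1)

/-- `G₁(t,u) = Σ_{k=0}^∞ a_k u^k`. -/
noncomputable def G1 (lam t η₁ η₂ p q : ℝ) (u : ℝ) : ℝ :=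
  ∑' k : ℕ, aCoef lam t η₁ η₂ p q k * u ^ k

/-- `G₂(t,−u) = Σ_{k=0}^∞ b_k u^k`; `G2m lam t η₁ η₂ p q u` stands for `G₂(t,−u)`. -/
noncomputable def G2m (lam t η₁ η₂ p q : ℝ) (u : ℝ) : ℝ :=
  ∑' k : ℕ, bCoef lam t η₁ η₂ p q k * u ^ k

/-- `H₁(t,x) = G₁(t, log x)` for `x > 1`. -/
noncomputable def H1fun (lam t η₁ η₂ p q : ℝ) (x : ℝ) : ℝ :=
  G1 lam t η₁ η₂ p q (Real.log x)

/-- `H₂(t,x) = G₂(t, log x) = G2m(t, log(1/x))` for `0 < x < 1`. -/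
noncomputable def H2fun (lam t η₁ η₂ p q : ℝ) (x : ℝ) : ℝ :=
  G2m lam t η₁ η₂ p q (Real.log x⁻¹)

/-- The density of the absolutely continuous part of the law of the exponential compound
Poisson factor: `H(t,x) = H₁(t,x) x^{−η₁−1}` for `x > 1` and `H(t,x) = H₂(t,x) x^{η₂−1}`
for `0 < x < 1`. -/
noncomputable def Hfun (lam t η₁ η₂ p q : ℝ) (x : ℝ) : ℝ :=
  if 1 < x then H1fun lam t η₁ η₂ p q x * x ^ (-η₁ - 1)
  else H2fun lam t η₁ η₂ p q x * x ^ (η₂ - 1)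

/-- The Mellin convolution of two measurable functions on `(0,∞)`:
`f ⋆_M g (x) = ∫_0^∞ f(x/t) g(t) dt/t`. -/
noncomputable def mellinConv (f g : ℝ → ℝ) (x : ℝ) : ℝ :=
  ∫ t in Set.Ioi (0:ℝ), f (x / t) * g t / t

/-- The sequence `d_0 = C`, `d_k = C B^k e^{2k} / k^{2k+2}` for `k ≥ 1`. -/
noncomputable def dSeq (C B : ℝ) (k : ℕ) : ℝ :=
  if k = 0 then C else C * B ^ k * Real.exp (2 * k) / (k : ℝ) ^ (2 * k + 2)



section KouAux

open Real Finset

lemma aux_ineq (x : ℝ) (hx : 1 ≤ x) :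
    1 / (4 * x ^ 2) ≤ 1/2 / (2*x - 1) - 1/2 / (2*x + 1) := by
  have h1 : (0:ℝ) < 2*x - 1 := by nlinarith
  have h2 : (0:ℝ) < 2*x + 1 := by nlinarith
  rw [div_sub_div _ _ h1.ne' h2.ne', div_le_div_iff₀ (by positivity) (by positivity)]
  nlinarith

lemma stirling_le (k : ℕ) (hk : 1 ≤ k) :
    Stirling.stirlingSeq k ≤ Real.sqrt π * Real.exp (1 / (2 * k)) := by
  have hkR : (1:ℝ) ≤ (k:ℝ) := by exact_mod_cast hk
  have hpos : 0 < Stirling.stirlingSeq k := by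
    obtain ⟨m, rfl⟩ := Nat.exists_eq_add_of_le hk
    simpa [Nat.add_comm] using Stirling.stirlingSeq'_pos m
  have key : ∀ M : ℕ, Real.log (Stirling.stirlingSeq (k + 0)) -
      Real.log (Stirling.stirlingSeq (k + M)) ≤ 1 / (2 * k) := by
    intro M
    have tel := Finset.sum_range_sub' (fun j => Real.log (Stirling.stirlingSeq (k + j))) M
    have telg := Finset.sum_range_sub' (fun j => 1/2 / (2 * ((k:ℝ) + j) - 1)) M
    have step : ∀ j : ℕ, Real.log (Stirling.stirlingSeq (k + j)) -
        Real.log (Stirling.stirlingSeq (k + (j+1))) ≤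
        1/2 / (2 * ((k:ℝ) + j) - 1) - 1/2 / (2 * ((k:ℝ) + (j+1:ℕ)) - 1) := by
      intro j
      obtain ⟨m, hm⟩ : ∃ m, k + j = m + 1 := ⟨k + j - 1, by omega⟩
      have h := Stirling.log_stirlingSeq_sub_log_stirlingSeq_succ (m+1)
      have hmR : (0:ℝ) ≤ (m:ℝ) := Nat.cast_nonneg m
      have hx : (1:ℝ) ≤ (m:ℝ) + 1 := by linarith
      have h2 := aux_ineq ((m:ℝ)+1) hx
      have hmc : (k:ℝ) + (j:ℝ) = (m:ℝ) + 1 := by exact_mod_cast congrArg (Nat.cast : ℕ → ℝ) hm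
      have e1 : k + (j+1) = m + 2 := by omega
      rw [hm, e1]
      rw [hmc, show ((k:ℝ)+((j+1:ℕ):ℝ)) = (m:ℝ)+1+1 from by push_cast; linarith,
        show 2*((m:ℝ)+1+1)-1 = 2*((m:ℝ)+1)+1 from by ring]
      push_cast at h
      exact h.trans h2
    have hgM : 0 ≤ 1/2 / (2 * ((k:ℝ) + M) - 1) := by
      have : (0:ℝ) ≤ (M:ℝ) := Nat.cast_nonneg M
      have : (0:ℝ) < 2 * ((k:ℝ) + M) - 1 := by nlinarith
      positivity
    have hg0 : 1/2 / (2 * ((k:ℝ) + (0:ℕ)) - 1) ≤ 1 / (2*k) := by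
      push_cast
      rw [add_zero, div_le_div_iff₀ (by nlinarith) (by positivity)]
      nlinarith
    calc Real.log (Stirling.stirlingSeq (k + 0)) - Real.log (Stirling.stirlingSeq (k + M))
        = ∑ j ∈ range M, (Real.log (Stirling.stirlingSeq (k + j)) -
            Real.log (Stirling.stirlingSeq (k + (j+1)))) := tel.symm
      _ ≤ ∑ j ∈ range M, (1/2 / (2 * ((k:ℝ) + j) - 1) - 1/2 / (2 * ((k:ℝ) + (j+1:ℕ)) - 1)) :=
            Finset.sum_le_sum fun j _ => step j
      _ = 1/2 / (2 * ((k:ℝ) + (0:ℕ)) - 1) - 1/2 / (2 * ((k:ℝ) + M) - 1) := telg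
      _ ≤ 1 / (2*k) := by linarith
  have hlim : Tendsto (fun M => Real.log (Stirling.stirlingSeq (k + M))) atTop
      (nhds (Real.log (Real.sqrt π))) := by
    have h0 : Tendsto (fun M : ℕ => k + M) atTop atTop := by
      simpa [Nat.add_comm] using tendsto_add_atTop_nat k
    have h1 : Tendsto (fun M => Stirling.stirlingSeq (k + M)) atTop (nhds (Real.sqrt π)) :=
      Stirling.tendsto_stirlingSeq_sqrt_pi.comp h0
    have hπ : (0:ℝ) < Real.sqrt π := Real.sqrt_pos.mpr Real.pi_pos
    exact ((Real.continuousAt_log hπ.ne').tendsto.comp h1 : _)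
  have hle : Real.log (Stirling.stirlingSeq (k+0)) - 1 / (2*k) ≤ Real.log (Real.sqrt π) :=
    ge_of_tendsto hlim (Eventually.of_forall fun M => by linarith [key M])
  have hπ : (0:ℝ) < Real.sqrt π := Real.sqrt_pos.mpr Real.pi_pos
  rw [Nat.add_zero] at hle
  calc Stirling.stirlingSeq k = Real.exp (Real.log (Stirling.stirlingSeq k)) :=
        (Real.exp_log hpos).symm
    _ ≤ Real.exp (Real.log (Real.sqrt π) + 1 / (2*k)) := Real.exp_le_exp.mpr (by linarith)
    _ = Real.sqrt π * Real.exp (1 / (2*k)) := by rw [Real.exp_add, Real.exp_log hπ]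


lemma stirling_ge (k : ℕ) (hk : 1 ≤ k) : Real.sqrt π ≤ Stirling.stirlingSeq k := by
  obtain ⟨m, rfl⟩ := Nat.exists_eq_add_of_le hk
  have h1 : Filter.Tendsto (fun n => Stirling.stirlingSeq (n + 1)) Filter.atTop
      (nhds (Real.sqrt π)) :=
    (Stirling.tendsto_stirlingSeq_sqrt_pi).comp (Filter.tendsto_add_atTop_nat 1)
  have := Stirling.stirlingSeq'_antitone.le_of_tendsto h1 m
  simpa [Nat.add_comm] using this

lemma fact_sandwich (k : ℕ) (hk : 1 ≤ k) :
    2 * π / ((k.factorial : ℝ) * ((k+1).factorial : ℝ)) ≤ Real.exp (2*(k:ℝ)) / (k:ℝ)^(2*k+2)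
    ∧ (1 - 3/((k:ℝ)+1)) * (Real.exp (2*(k:ℝ)) / (k:ℝ)^(2*k+2)) ≤
      2 * π / ((k.factorial : ℝ) * ((k+1).factorial : ℝ)) := by
  have hkR : (1:ℝ) ≤ (k:ℝ) := by exact_mod_cast hk
  have hkpos : (0:ℝ) < (k:ℝ) := by linarith
  set s := Stirling.stirlingSeq k with hs
  have hspos : 0 < s := by
    obtain ⟨m, rfl⟩ := Nat.exists_eq_add_of_le hk
    simpa [hs, Nat.add_comm] using Stirling.stirlingSeq'_pos m
  have hπ : (0:ℝ) < π := Real.pi_pos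
  have hs2lo : π ≤ s^2 := by
    have h := stirling_ge k hk
    nlinarith [Real.sq_sqrt hπ.le, Real.sqrt_nonneg π]
  have hs2hi : s^2 ≤ π * Real.exp (1/(k:ℝ)) := by
    have h := stirling_le k hk
    have hsq : Real.sqrt π ^ 2 = π := Real.sq_sqrt hπ.le
    have he : Real.exp (1/(2*(k:ℝ))) ^ 2 = Real.exp (1/(k:ℝ)) := by
      rw [← Real.exp_nat_mul]
      congr 1
      field_simp
      norm_num
    nlinarith [Real.sqrt_nonneg π, Real.exp_pos (1/(2*(k:ℝ))), hspos.le]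
  have hden : (0:ℝ) < Real.sqrt (2*(k:ℝ)) * ((k:ℝ) / Real.exp 1) ^ k := by positivity
  have hF : (k.factorial : ℝ) = s * (Real.sqrt (2*(k:ℝ)) * ((k:ℝ) / Real.exp 1) ^ k) := by
    rw [hs, Stirling.stirlingSeq, div_mul_cancel₀]
    exact hden.ne'
  have hek : Real.exp (2*(k:ℝ)) = (Real.exp 1)^(2*k) := by
    rw [← Real.exp_nat_mul]
    congr 1
    push_cast; ring
  have hFF : ((k.factorial : ℝ))^2 * Real.exp (2*(k:ℝ)) = s^2 * (2*(k:ℝ)) * (k:ℝ)^(2*k) := by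
    have hd : (((k:ℝ) / Real.exp 1) ^ k)^2 = (k:ℝ)^(2*k) / (Real.exp 1)^(2*k) := by
      rw [← pow_mul, mul_comm k 2, div_pow]
    rw [hF, mul_pow, mul_pow, Real.sq_sqrt (by positivity : (0:ℝ) ≤ 2*(k:ℝ)), hd, hek]
    field_simp
  have hFpos : (0:ℝ) < (k.factorial : ℝ) := by exact_mod_cast k.factorial_pos
  have hGpos : (0:ℝ) < ((k+1).factorial : ℝ) := by exact_mod_cast (k+1).factorial_pos
  have hG : ((k+1).factorial : ℝ) = ((k:ℝ)+1) * (k.factorial : ℝ) := by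
    rw [Nat.factorial_succ]; push_cast; ring
  have hPpos : (0:ℝ) < (k:ℝ)^(2*k) := by positivity
  have hprod : Real.exp (2*(k:ℝ)) * ((k.factorial : ℝ) * ((k+1).factorial : ℝ)) =
      ((k:ℝ)+1) * s^2 * (2*(k:ℝ)) * (k:ℝ)^(2*k) := by
    rw [hG]; linear_combination ((k:ℝ)+1) * hFF
  have hkk : (k:ℝ)^(2*k+2) = (k:ℝ)^2 * (k:ℝ)^(2*k) := by
    rw [pow_add]; ring
  constructor
  · rw [div_le_div_iff₀ (by positivity) (by positivity), hkk]
    have key1 : π*(k:ℝ) ≤ ((k:ℝ)+1)*s^2 := by nlinarith [hs2lo, hπ]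
    have h7 := mul_le_mul_of_nonneg_right key1
      (by positivity : (0:ℝ) ≤ 2*(k:ℝ)*(k:ℝ)^(2*k))
    nlinarith [h7, hprod]
  · rcases le_or_gt (k:ℝ) 2 with hk2 | hk2
    · have h1 : 1 - 3/((k:ℝ)+1) ≤ 0 := by
        rw [sub_nonpos, le_div_iff₀ (by linarith)]
        linarith
      have h2 : (0:ℝ) ≤ 2*π / ((k.factorial:ℝ) * ((k+1).factorial:ℝ)) := by positivity
      refine le_trans (mul_nonpos_iff.mpr (Or.inr ⟨h1, by positivity⟩)) h2
    · set w := Real.exp (1/(k:ℝ)) with hwdef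
      set y := Real.exp (-(1/(k:ℝ))) with hydef
      have hwpos : 0 < w := Real.exp_pos _
      have hypos : 0 < y := Real.exp_pos _
      have hwy : w * y = 1 := by rw [hwdef, hydef, ← Real.exp_add]; simp
      have h2 : 1 - 1/(k:ℝ) ≤ y := by
        have := Real.add_one_le_exp (-(1/(k:ℝ)))
        rw [hydef]; linarith
      have h6 : (k:ℝ)*w*(1 - 1/(k:ℝ)) ≤ (k:ℝ)*w*y :=
        mul_le_mul_of_nonneg_left h2 (by positivity)
      have h7 : (k:ℝ)*w*(1 - 1/(k:ℝ)) = ((k:ℝ)-1)*w := by field_simp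
      have h8 : (k:ℝ)*w*y = (k:ℝ) := by rw [mul_assoc, hwy, mul_one]
      rw [h7, h8] at h6
      have e1 : ((k:ℝ)-2) * s^2 ≤ ((k:ℝ)-2) * (π * w) :=
        mul_le_mul_of_nonneg_left hs2hi (by linarith)
      have e3 : π * (((k:ℝ)-1)*w) ≤ π * (k:ℝ) := mul_le_mul_of_nonneg_left h6 hπ.le
      have hks : ((k:ℝ)-2) * s^2 ≤ π * (k:ℝ) := by
        linarith [e1, e3, (mul_pos hπ hwpos).le]
      have hfrac : 1 - 3/((k:ℝ)+1) = ((k:ℝ)-2)/((k:ℝ)+1) := by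
        field_simp
        ring
      rw [hfrac, div_mul_div_comm, div_le_div_iff₀ (by positivity) (by positivity)]
      calc ((k:ℝ)-2) * Real.exp (2*(k:ℝ)) * ((k.factorial:ℝ) * ((k+1).factorial:ℝ))
          = (((k:ℝ)-2)*s^2) * ((2*(k:ℝ))*((k:ℝ)+1)*(k:ℝ)^(2*k)) := by
            linear_combination ((k:ℝ)-2) * hprod
        _ ≤ (π*(k:ℝ)) * ((2*(k:ℝ))*((k:ℝ)+1)*(k:ℝ)^(2*k)) :=
            mul_le_mul_of_nonneg_right hks (by positivity)
        _ = 2*π * (((k:ℝ)+1) * (k:ℝ)^(2*k+2)) := by rw [hkk]; ring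

-- per-term rearranged formula, m ≥ 1
lemma term_formula (lam t η₁ η₂ p q : ℝ) (hs : η₁ + η₂ ≠ 0) (K m : ℕ) (hK : 1 ≤ K) (hm : 1 ≤ m) :
    poisCoef lam t (m + K) * Pcoef η₁ η₂ p q (m + K) K =
      Real.exp (-(lam * t)) * (lam * t * p) ^ K *
        ∑ j ∈ Finset.range m, ((m - 1).choose j : ℝ) *
          (lam * t * (η₁ / (η₁ + η₂)) * p) ^ j * (lam * t * (η₂ / (η₁ + η₂)) * q) ^ (m - j) /
          (((K + j).factorial : ℝ) * ((m - j).factorial : ℝ)) := by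
  rw [Pcoef, if_neg (by omega)]
  rw [show Finset.Ico K (m + K) = Finset.Ico (0 + K) (m + K) by rw [Nat.zero_add]]
  rw [Finset.sum_Ico_eq_sum_range]
  simp only [Nat.zero_add]
  rw [Finset.mul_sum, Finset.mul_sum]
  refine Finset.sum_congr (by rw [Nat.add_sub_cancel]) fun j hj => ?_
  have hjm : j < m := Finset.mem_range.mp hj
  have e1 : m + K - K - 1 = m - 1 := by omega
  have e2 : K + j - K = j := by omega
  have e3 : m + K - (K + j) = m - j := by omega
  rw [e1, e2, e3]
  have h1 : K + j ≤ m + K := by omega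
  have hfac1 : (0:ℝ) < ((K + j).factorial : ℝ) := by exact_mod_cast (K+j).factorial_pos
  have hfac2 : (0:ℝ) < ((m - j).factorial : ℝ) := by exact_mod_cast (m-j).factorial_pos
  have hfac3 : (0:ℝ) < ((m + K).factorial : ℝ) := by exact_mod_cast (m+K).factorial_pos
  have hch : ((m + K).choose (K + j) : ℝ) =
      ((m + K).factorial : ℝ) / (((K + j).factorial : ℝ) * ((m - j).factorial : ℝ)) := by
    rw [eq_div_iff (by positivity)]
    have h0 := Nat.choose_mul_factorial_mul_factorial h1
    have h2 : m + K - (K + j) = m - j := by omega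
    rw [h2] at h0
    have h3 := congrArg (Nat.cast : ℕ → ℝ) h0
    push_cast at h3
    rw [← mul_assoc]
    exact h3
  have hpow : (lam * t) ^ (m + K) = (lam * t) ^ K * (lam * t) ^ j * (lam * t) ^ (m - j) := by
    rw [← pow_add, ← pow_add]
    congr 1
    omega
  have hpp : p ^ (K + j) = p ^ K * p ^ j := pow_add p K j
  have hu : (lam * t * (η₁ / (η₁ + η₂)) * p) ^ j =
      (lam * t) ^ j * (η₁ / (η₁ + η₂)) ^ j * p ^ j := by
    rw [mul_pow, mul_pow]
  have hv : (lam * t * (η₂ / (η₁ + η₂)) * q) ^ (m - j) =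
      (lam * t) ^ (m - j) * (η₂ / (η₁ + η₂)) ^ (m - j) * q ^ (m - j) := by
    rw [mul_pow, mul_pow]
  have hgp : (lam * t * p) ^ K = (lam * t) ^ K * p ^ K := mul_pow _ _ K
  rw [poisCoef, hch, hpow, hpp, hu, hv, hgp]
  generalize ((m + K).factorial : ℝ) = A at *
  generalize ((K + j).factorial : ℝ) = B at *
  generalize ((m - j).factorial : ℝ) = C at *
  generalize m - j = n at *
  generalize η₁ / (η₁ + η₂) = a at *
  generalize η₂ / (η₁ + η₂) = b at *
  generalize lam * t = x at *
  generalize ((m - 1).choose j : ℝ) = c at *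
  have hAA : A * A⁻¹ = 1 := mul_inv_cancel₀ hfac3.ne'
  simp only [div_eq_mul_inv]
  linear_combination (Real.exp (-x) * (x ^ K * x ^ j * x ^ n) * c * (B * C)⁻¹ *
    (a ^ j * b ^ n * p ^ K * p ^ j * q ^ n)) * hAA

noncomputable def geoA (a : ℝ) (j : ℕ) : ℝ := if j = 0 then 0 else a ^ j
noncomputable def expB (b : ℝ) (l : ℕ) : ℝ := if l = 0 then 0 else b ^ l / (l.factorial : ℝ)

lemma choose_le_two_pow' (n j : ℕ) : (n.choose j : ℝ) ≤ 2 ^ n := by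
  have : n.choose j ≤ 2 ^ n := by
    rcases le_or_gt j n with h | h
    · calc n.choose j ≤ ∑ i ∈ Finset.range (n+1), n.choose i :=
          Finset.single_le_sum (fun i _ => Nat.zero_le _)
            (Finset.mem_range.mpr (Nat.lt_succ_of_le h))
      _ = 2 ^ n := Nat.sum_range_choose n
    · simp [Nat.choose_eq_zero_of_lt h]
  exact_mod_cast this

section Bounds

variable (lam t η₁ η₂ p q : ℝ) (hlam : 0 < lam) (ht : 0 < t) (hη₁ : 0 < η₁) (hη₂ : 0 < η₂)
  (hp : 0 < p) (hq : 0 < q)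

include hlam ht hη₁ hη₂ hp hq

lemma term_lower (K m : ℕ) (hK : 1 ≤ K) :
    Real.exp (-(lam * t)) * (lam * t * p) ^ K *
        ((lam * t * (η₂ / (η₁ + η₂)) * q) ^ m / ((K.factorial : ℝ) * (m.factorial : ℝ)))
      ≤ poisCoef lam t (m + K) * Pcoef η₁ η₂ p q (m + K) K := by
  have hspos : (0:ℝ) < η₁ + η₂ := by linarith
  have hu : (0:ℝ) ≤ lam * t * (η₁ / (η₁ + η₂)) * p := by positivity
  have hv : (0:ℝ) ≤ lam * t * (η₂ / (η₁ + η₂)) * q := by positivity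
  rcases Nat.eq_zero_or_pos m with rfl | hm
  · rw [Pcoef, if_pos (by omega), poisCoef, Nat.zero_add]
    rw [mul_pow (lam*t) p K]
    simp [Nat.factorial_zero]
    ring_nf
    exact le_refl _
  · rw [term_formula lam t η₁ η₂ p q hspos.ne' K m hK hm]
    refine mul_le_mul_of_nonneg_left ?_ (by positivity)
    have h0 : (0:ℕ) ∈ Finset.range m := Finset.mem_range.mpr hm
    have := Finset.single_le_sum (f := fun j => ((m - 1).choose j : ℝ) *
        (lam * t * (η₁ / (η₁ + η₂)) * p) ^ j * (lam * t * (η₂ / (η₁ + η₂)) * q) ^ (m - j) /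
        (((K + j).factorial : ℝ) * ((m - j).factorial : ℝ)))
      (fun j _ => by positivity) h0
    simpa [Nat.choose_zero_right] using this

lemma term_upper (K m : ℕ) (hK : 1 ≤ K) :
    poisCoef lam t (m + K) * Pcoef η₁ η₂ p q (m + K) K ≤
      Real.exp (-(lam * t)) * (lam * t * p) ^ K *
          ((lam * t * (η₂ / (η₁ + η₂)) * q) ^ m / ((K.factorial : ℝ) * (m.factorial : ℝ)))
      + Real.exp (-(lam * t)) * (lam * t * p) ^ K / (K.factorial : ℝ) *
          ∑ j ∈ Finset.range (m+1),
            geoA (2 * (lam * t * (η₁ / (η₁ + η₂)) * p) / ((K:ℝ)+1)) j *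
            expB (2 * (lam * t * (η₂ / (η₁ + η₂)) * q)) (m - j) := by
  have hspos : (0:ℝ) < η₁ + η₂ := by linarith
  have hKfac : (0:ℝ) < (K.factorial : ℝ) := by exact_mod_cast K.factorial_pos
  rcases Nat.eq_zero_or_pos m with rfl | hm
  · rw [Pcoef, if_pos (by omega), poisCoef, Nat.zero_add]
    rw [mul_pow (lam*t) p K]
    simp [geoA, expB, Nat.factorial_zero, Finset.sum_range_one]
    ring_nf
    exact le_refl _
  · rw [term_formula lam t η₁ η₂ p q hspos.ne' K m hK hm]
    set u := lam * t * (η₁ / (η₁ + η₂)) * p with hudef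
    set v := lam * t * (η₂ / (η₁ + η₂)) * q with hvdef
    have hu : (0:ℝ) ≤ u := by rw [hudef]; positivity
    have hv : (0:ℝ) ≤ v := by rw [hvdef]; positivity
    clear_value u v
    set a := 2 * u / ((K:ℝ)+1) with hadef
    have ha : (0:ℝ) ≤ a := by rw [hadef]; positivity
    have hgeo : ∀ j, 0 ≤ geoA a j := by
      intro j; unfold geoA; split <;> positivity
    have hexpB : ∀ l, 0 ≤ expB (2*v) l := by
      intro l; unfold expB; split
      · exact le_refl 0
      · positivity
    have hT : ∀ j : ℕ, (0:ℝ) ≤ (if j = 0 then v^m/((K.factorial:ℝ)*(m.factorial:ℝ)) else 0)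
        + (1/(K.factorial:ℝ)) * (geoA a j * expB (2*v) (m - j)) := by
      intro j
      have h1 : (0:ℝ) ≤ (if j = 0 then v^m/((K.factorial:ℝ)*(m.factorial:ℝ)) else 0) := by
        split <;> positivity
      have h2 : (0:ℝ) ≤ (1/(K.factorial:ℝ)) * (geoA a j * expB (2*v) (m - j)) := by
        have := hgeo j; have := hexpB (m - j); positivity
      linarith
    have hstep : ∀ j ∈ Finset.range m, ((m - 1).choose j : ℝ) * u ^ j * v ^ (m - j) /
          (((K + j).factorial : ℝ) * ((m - j).factorial : ℝ)) ≤
        (if j = 0 then v^m/((K.factorial:ℝ)*(m.factorial:ℝ)) else 0)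
          + (1/(K.factorial:ℝ)) * (geoA a j * expB (2*v) (m - j)) := by
      intro j hj
      have hjm : j < m := Finset.mem_range.mp hj
      rcases Nat.eq_zero_or_pos j with rfl | hj1
      · have hg0 : geoA a 0 = 0 := by simp [geoA]
        rw [if_pos rfl, hg0, zero_mul, mul_zero, add_zero]
        simp
      · have hjne : j ≠ 0 := hj1.ne'
        have hmj : m - j ≠ 0 := by omega
        rw [if_neg hjne, zero_add, geoA, if_neg hjne, expB, if_neg hmj]
        have hfj : (0:ℝ) < ((m-j).factorial : ℝ) := by exact_mod_cast (m-j).factorial_pos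
        have hnum : ((m - 1).choose j : ℝ) * u ^ j * v ^ (m - j) ≤
            (2:ℝ)^j * 2^(m-j) * u ^ j * v ^ (m - j) := by
          have hc : ((m - 1).choose j : ℝ) ≤ (2:ℝ)^j * 2^(m-j) := by
            calc ((m - 1).choose j : ℝ) ≤ 2^(m-1) := choose_le_two_pow' (m-1) j
              _ ≤ 2^m := pow_le_pow_right₀ one_le_two (by omega)
              _ = 2^j * 2^(m-j) := by rw [← pow_add]; congr 1; omega
          have h2 : (0:ℝ) ≤ u ^ j * v ^ (m - j) := by positivity
          calc ((m - 1).choose j : ℝ) * u ^ j * v ^ (m - j)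
              = ((m - 1).choose j : ℝ) * (u ^ j * v ^ (m - j)) := by ring
            _ ≤ (2:ℝ)^j * 2^(m-j) * (u ^ j * v ^ (m - j)) :=
                mul_le_mul_of_nonneg_right hc h2
            _ = (2:ℝ)^j * 2^(m-j) * u ^ j * v ^ (m - j) := by ring
        have hden : (K.factorial:ℝ) * ((K:ℝ)+1)^j * ((m-j).factorial : ℝ) ≤
            ((K + j).factorial : ℝ) * ((m - j).factorial : ℝ) := by
          refine mul_le_mul_of_nonneg_right ?_ hfj.le
          have := Nat.factorial_mul_pow_le_factorial (m := K) (n := j)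
          exact_mod_cast this
        have hdpos : (0:ℝ) < (K.factorial:ℝ) * ((K:ℝ)+1)^j * ((m-j).factorial : ℝ) := by
          positivity
        calc ((m - 1).choose j : ℝ) * u ^ j * v ^ (m - j) /
              (((K + j).factorial : ℝ) * ((m - j).factorial : ℝ))
            ≤ ((2:ℝ)^j * 2^(m-j) * u ^ j * v ^ (m - j)) /
              ((K.factorial:ℝ) * ((K:ℝ)+1)^j * ((m-j).factorial : ℝ)) :=
              div_le_div₀ (by positivity) hnum hdpos hden
          _ = 1/(K.factorial:ℝ) * (a^j * ((2*v)^(m-j) / ((m-j).factorial : ℝ))) := by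
              rw [hadef, div_pow, mul_pow, mul_pow (2:ℝ) v]
              have hK1 : ((K:ℝ)+1) ≠ 0 := by positivity
              field_simp
    have hsum : (∑ j ∈ Finset.range m, ((m - 1).choose j : ℝ) * u ^ j * v ^ (m - j) /
          (((K + j).factorial : ℝ) * ((m - j).factorial : ℝ)))
        ≤ v^m/((K.factorial:ℝ)*(m.factorial:ℝ))
          + (1/(K.factorial:ℝ)) * ∑ j ∈ Finset.range (m+1), geoA a j * expB (2*v) (m - j) := by
      calc (∑ j ∈ Finset.range m, ((m - 1).choose j : ℝ) * u ^ j * v ^ (m - j) /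
            (((K + j).factorial : ℝ) * ((m - j).factorial : ℝ)))
          ≤ ∑ j ∈ Finset.range m, ((if j = 0 then v^m/((K.factorial:ℝ)*(m.factorial:ℝ)) else 0)
            + (1/(K.factorial:ℝ)) * (geoA a j * expB (2*v) (m - j))) :=
            Finset.sum_le_sum hstep
        _ ≤ ∑ j ∈ Finset.range (m+1), ((if j = 0 then v^m/((K.factorial:ℝ)*(m.factorial:ℝ)) else 0)
            + (1/(K.factorial:ℝ)) * (geoA a j * expB (2*v) (m - j))) :=
            Finset.sum_le_sum_of_subset_of_nonneg
              (Finset.range_subset_range.mpr (Nat.le_succ m)) (fun j _ _ => hT j)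
        _ = (∑ j ∈ Finset.range (m+1), (if j = 0 then v^m/((K.factorial:ℝ)*(m.factorial:ℝ)) else 0))
            + ∑ j ∈ Finset.range (m+1), (1/(K.factorial:ℝ)) * (geoA a j * expB (2*v) (m - j)) :=
            Finset.sum_add_distrib
        _ = v^m/((K.factorial:ℝ)*(m.factorial:ℝ))
            + (1/(K.factorial:ℝ)) * ∑ j ∈ Finset.range (m+1), geoA a j * expB (2*v) (m - j) := by
            rw [Finset.sum_eq_single_of_mem 0 (Finset.mem_range.mpr (by omega))
              (fun b _ hb => if_neg hb), if_pos rfl, ← Finset.mul_sum]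
    calc Real.exp (-(lam * t)) * (lam * t * p) ^ K *
          (∑ j ∈ Finset.range m, ((m - 1).choose j : ℝ) * u ^ j * v ^ (m - j) /
            (((K + j).factorial : ℝ) * ((m - j).factorial : ℝ)))
        ≤ Real.exp (-(lam * t)) * (lam * t * p) ^ K *
          (v^m/((K.factorial:ℝ)*(m.factorial:ℝ))
            + (1/(K.factorial:ℝ)) * ∑ j ∈ Finset.range (m+1), geoA a j * expB (2*v) (m - j)) :=
          mul_le_mul_of_nonneg_left hsum (by positivity)
      _ = Real.exp (-(lam * t)) * (lam * t * p) ^ K * (v ^ m / ((K.factorial : ℝ) * (m.factorial : ℝ)))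
          + Real.exp (-(lam * t)) * (lam * t * p) ^ K / (K.factorial : ℝ) *
            ∑ j ∈ Finset.range (m+1), geoA a j * expB (2*v) (m - j) := by ring

end Bounds

lemma geoA_summable {a : ℝ} (ha : 0 ≤ a) (ha1 : a < 1) : Summable (geoA a) := by
  refine Summable.of_nonneg_of_le (fun j => ?_) (fun j => ?_) (summable_geometric_of_lt_one ha ha1)
  · unfold geoA; split
    · exact le_refl 0
    · positivity
  · unfold geoA; split
    · positivity
    · exact le_refl _

lemma geoA_tsum {a : ℝ} (ha : 0 ≤ a) (ha1 : a < 1) : ∑' j, geoA a j = a / (1 - a) := by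
  rw [Summable.tsum_eq_zero_add (geoA_summable ha ha1)]
  have h1 : geoA a 0 = 0 := by simp [geoA]
  have h2 : ∀ j : ℕ, geoA a (j + 1) = a * a ^ j := by
    intro j; rw [geoA, if_neg (Nat.succ_ne_zero j), pow_succ]; ring
  simp_rw [h1, h2, zero_add]
  rw [tsum_mul_left, tsum_geometric_of_lt_one ha ha1]
  rw [div_eq_mul_inv]

lemma expB_summable {b : ℝ} (hb : 0 ≤ b) : Summable (expB b) := by
  refine Summable.of_nonneg_of_le (fun l => ?_) (fun l => ?_) (Real.summable_pow_div_factorial b)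
  · unfold expB; split
    · exact le_refl 0
    · positivity
  · unfold expB; split
    · positivity
    · exact le_refl _

lemma expB_tsum {b : ℝ} (hb : 0 ≤ b) : ∑' l, expB b l = Real.exp b - 1 := by
  have hexp : Real.exp b = ∑' n : ℕ, b ^ n / n.factorial := by
    rw [Real.exp_eq_exp_ℝ, NormedSpace.exp_eq_tsum_div]
  rw [Summable.tsum_eq_zero_add (expB_summable hb),
    Summable.tsum_eq_zero_add (Real.summable_pow_div_factorial b)] at *
  have h1 : expB b 0 = 0 := by simp [expB]
  have h2 : ∀ l : ℕ, expB b (l + 1) = b ^ (l+1) / ((l+1).factorial : ℝ) := by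
    intro l; rw [expB, if_neg (Nat.succ_ne_zero l)]
  simp_rw [h1, h2, zero_add]
  have h3 : b ^ 0 / ((Nat.factorial 0 : ℕ) : ℝ) = 1 := by norm_num
  rw [hexp]
  simp only [pow_zero, Nat.factorial_zero, Nat.cast_one]
  ring

lemma AB_summable {a b : ℝ} (ha : 0 ≤ a) (ha1 : a < 1) (hb : 0 ≤ b) :
    Summable (fun m => ∑ j ∈ Finset.range (m+1), geoA a j * expB b (m - j)) := by
  have hAn : Summable (fun j => ‖geoA a j‖) := by
    refine (geoA_summable ha ha1).congr fun j => ?_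
    rw [Real.norm_of_nonneg]
    unfold geoA; split
    · exact le_refl 0
    · positivity
  have hBn : Summable (fun l => ‖expB b l‖) := by
    refine (expB_summable hb).congr fun l => ?_
    rw [Real.norm_of_nonneg]
    unfold expB; split
    · exact le_refl 0
    · positivity
  exact (summable_norm_sum_mul_range_of_summable_norm hAn hBn).of_norm

lemma AB_tsum {a b : ℝ} (ha : 0 ≤ a) (ha1 : a < 1) (hb : 0 ≤ b) :
    ∑' m, (∑ j ∈ Finset.range (m+1), geoA a j * expB b (m - j)) =
      (a / (1 - a)) * (Real.exp b - 1) := by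
  have hAn : Summable (fun j => ‖geoA a j‖) := by
    refine (geoA_summable ha ha1).congr fun j => ?_
    rw [Real.norm_of_nonneg]
    unfold geoA; split
    · exact le_refl 0
    · positivity
  have hBn : Summable (fun l => ‖expB b l‖) := by
    refine (expB_summable hb).congr fun l => ?_
    rw [Real.norm_of_nonneg]
    unfold expB; split
    · exact le_refl 0
    · positivity
  rw [← tsum_mul_tsum_eq_tsum_sum_range_of_summable_norm hAn hBn,
    geoA_tsum ha ha1, expB_tsum hb]

lemma aCoef_sandwich (lam t η₁ η₂ p q : ℝ) (hlam : 0 < lam) (ht : 0 < t) (hη₁ : 0 < η₁)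
    (hη₂ : 0 < η₂) (hp : 0 < p) (hq : 0 < q) (k : ℕ)
    (hk4 : 4 * (lam * t * (η₁ / (η₁ + η₂)) * p) ≤ (k:ℝ) + 2) :
    Real.exp (-(lam * t)) * Real.exp (lam * t * (η₂ / (η₁ + η₂)) * q) * (η₁ * (lam * t * p)) ^ (k+1)
        / ((k.factorial : ℝ) * ((k+1).factorial : ℝ))
      ≤ aCoef lam t η₁ η₂ p q k
    ∧ aCoef lam t η₁ η₂ p q k ≤
      (1 + 4 * (lam * t * (η₁ / (η₁ + η₂)) * p) *
          Real.exp (2 * (lam * t * (η₂ / (η₁ + η₂)) * q)) / ((k:ℝ) + 2)) *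
      (Real.exp (-(lam * t)) * Real.exp (lam * t * (η₂ / (η₁ + η₂)) * q) * (η₁ * (lam * t * p)) ^ (k+1)
        / ((k.factorial : ℝ) * ((k+1).factorial : ℝ))) := by
  have hspos : (0:ℝ) < η₁ + η₂ := by linarith
  set K := k + 1 with hKdef
  set u := lam * t * (η₁ / (η₁ + η₂)) * p with hudef
  set v := lam * t * (η₂ / (η₁ + η₂)) * q with hvdef
  set a := 2 * u / ((K:ℝ) + 1) with hadef
  have hupos : 0 < u := by rw [hudef]; positivity
  have hvpos : 0 < v := by rw [hvdef]; positivity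
  have hK1 : ((K:ℝ) + 1) = (k:ℝ) + 2 := by rw [hKdef]; push_cast; ring
  have hapos : 0 < a := by rw [hadef]; positivity
  have ha2 : a ≤ 1/2 := by
    rw [hadef, div_le_iff₀ (by positivity)]
    rw [hK1]
    linarith
  have ha1 : a < 1 := by linarith
  set E := Real.exp (-(lam * t)) * (lam * t * p) ^ K with hEdef
  have hEpos : 0 < E := by rw [hEdef]; positivity
  have hKfac : (0:ℝ) < (K.factorial : ℝ) := by exact_mod_cast K.factorial_pos
  have hkfac : (0:ℝ) < (k.factorial : ℝ) := by exact_mod_cast k.factorial_pos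
  -- lower / upper sequences
  set L : ℕ → ℝ := fun m => E * (v ^ m / ((K.factorial : ℝ) * (m.factorial : ℝ))) with hLdef
  set G : ℕ → ℝ := fun m => ∑ j ∈ Finset.range (m+1), geoA a j * expB (2*v) (m - j) with hGdef
  set F : ℕ → ℝ := fun m => poisCoef lam t (m + K) * Pcoef η₁ η₂ p q (m + K) K with hFdef
  have hLF : ∀ m, L m ≤ F m := fun m =>
    term_lower lam t η₁ η₂ p q hlam ht hη₁ hη₂ hp hq K m (by omega)
  have hFU : ∀ m, F m ≤ L m + E / (K.factorial : ℝ) * G m := fun m =>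
    term_upper lam t η₁ η₂ p q hlam ht hη₁ hη₂ hp hq K m (by omega)
  have hLnonneg : ∀ m, 0 ≤ L m := fun m => by
    simp only [hLdef]
    positivity

  have hLsummable : Summable L := by
    have h1 : Summable (fun m => (E / (K.factorial : ℝ)) * (v ^ m / (m.factorial : ℝ))) :=
      (Real.summable_pow_div_factorial v).mul_left _
    refine h1.congr fun m => ?_
    simp only [hLdef]
    field_simp
  have hLtsum : ∑' m, L m = E / (K.factorial : ℝ) * Real.exp v := by
    have hexp : Real.exp v = ∑' n : ℕ, v ^ n / n.factorial := by
      rw [Real.exp_eq_exp_ℝ, NormedSpace.exp_eq_tsum_div]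
    calc ∑' m, L m = ∑' m, (E / (K.factorial : ℝ)) * (v ^ m / (m.factorial : ℝ)) := by
          refine tsum_congr fun m => ?_
          simp only [hLdef]
          field_simp
      _ = (E / (K.factorial : ℝ)) * ∑' m, (v ^ m / (m.factorial : ℝ)) := tsum_mul_left
      _ = E / (K.factorial : ℝ) * Real.exp v := by rw [hexp]
  have hGsummable : Summable G := AB_summable hapos.le ha1 (by positivity)
  have hGtsum : ∑' m, G m = (a / (1 - a)) * (Real.exp (2*v) - 1) :=
    AB_tsum hapos.le ha1 (by positivity)
  have hUsummable : Summable (fun m => L m + E / (K.factorial : ℝ) * G m) :=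
    hLsummable.add (hGsummable.mul_left _)
  have hFsummable : Summable F :=
    Summable.of_nonneg_of_le (fun m => le_trans (hLnonneg m) (hLF m)) hFU hUsummable
  have hFlow : ∑' m, L m ≤ ∑' m, F m := Summable.tsum_le_tsum hLF hLsummable hFsummable
  have hFhigh : ∑' m, F m ≤ ∑' m, (L m + E / (K.factorial : ℝ) * G m) :=
    Summable.tsum_le_tsum hFU hFsummable hUsummable
  have hUtsum : ∑' m, (L m + E / (K.factorial : ℝ) * G m) =
      E / (K.factorial : ℝ) * Real.exp v +
        E / (K.factorial : ℝ) * ((a / (1 - a)) * (Real.exp (2*v) - 1)) := by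
    rw [Summable.tsum_add hLsummable (hGsummable.mul_left _), hLtsum, tsum_mul_left, hGtsum]
  -- identify aCoef
  have haCoef : aCoef lam t η₁ η₂ p q k = η₁ ^ K / (k.factorial : ℝ) * ∑' m, F m := rfl
  have hMeq : Real.exp (-(lam * t)) * Real.exp v * (η₁ * (lam * t * p)) ^ K
        / ((k.factorial : ℝ) * (K.factorial : ℝ))
      = η₁ ^ K / (k.factorial : ℝ) * (E / (K.factorial : ℝ) * Real.exp v) := by
    rw [hEdef, mul_pow]
    field_simp
  have hKK : ((k+1).factorial : ℝ) = (K.factorial : ℝ) := by rw [hKdef]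
  constructor
  · rw [haCoef, hKK, hMeq]
    refine mul_le_mul_of_nonneg_left ?_ (by positivity)
    calc E / (K.factorial : ℝ) * Real.exp v = ∑' m, L m := hLtsum.symm
      _ ≤ ∑' m, F m := hFlow
  · rw [haCoef, hKK, hMeq]
    have hbound : ∑' m, F m ≤
        (1 + 4 * u * Real.exp (2*v) / ((k:ℝ) + 2)) * (E / (K.factorial : ℝ) * Real.exp v) := by
      refine le_trans hFhigh (le_trans (le_of_eq hUtsum) ?_)
      have h1 : a / (1 - a) ≤ 2 * a := by
        rw [div_le_iff₀ (by linarith)]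
        nlinarith
      have h2 : (a / (1 - a)) * (Real.exp (2*v) - 1) ≤ 2 * a * Real.exp (2*v) := by
        have h3 : (0:ℝ) ≤ Real.exp (2*v) - 1 := by
          have := Real.one_le_exp (by positivity : (0:ℝ) ≤ 2*v)
          linarith
        calc (a / (1 - a)) * (Real.exp (2*v) - 1) ≤ 2 * a * (Real.exp (2*v) - 1) :=
              mul_le_mul_of_nonneg_right h1 h3
          _ ≤ 2 * a * Real.exp (2*v) := by
              have h8 : (0:ℝ) ≤ 2*a := by linarith
              have h9 : Real.exp (2*v) - 1 ≤ Real.exp (2*v) := by linarith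
              exact mul_le_mul_of_nonneg_left h9 h8
      have h4 : 2 * a = 4 * u / ((k:ℝ) + 2) := by
        rw [hadef, hK1]; ring
      have h5 : E / (K.factorial : ℝ) * ((a / (1 - a)) * (Real.exp (2*v) - 1)) ≤
          E / (K.factorial : ℝ) * (4 * u / ((k:ℝ) + 2) * Real.exp (2*v)) := by
        rw [← h4]
        exact mul_le_mul_of_nonneg_left h2 (by positivity)
      have h6 : E / (K.factorial : ℝ) * (4 * u / ((k:ℝ) + 2) * Real.exp (2*v)) ≤
          4 * u * Real.exp (2*v) / ((k:ℝ) + 2) * (E / (K.factorial : ℝ) * Real.exp v) := by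
        have hev : (1:ℝ) ≤ Real.exp v := Real.one_le_exp hvpos.le
        have h7 : (0:ℝ) ≤ E / (K.factorial : ℝ) * (4 * u / ((k:ℝ) + 2) * Real.exp (2*v)) := by
          positivity
        calc E / (K.factorial : ℝ) * (4 * u / ((k:ℝ) + 2) * Real.exp (2*v))
            = 4 * u * Real.exp (2*v) / ((k:ℝ) + 2) * (E / (K.factorial : ℝ)) * 1 := by ring
          _ ≤ 4 * u * Real.exp (2*v) / ((k:ℝ) + 2) * (E / (K.factorial : ℝ)) * Real.exp v := by
              refine mul_le_mul_of_nonneg_left hev (by positivity)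
          _ = 4 * u * Real.exp (2*v) / ((k:ℝ) + 2) * (E / (K.factorial : ℝ) * Real.exp v) := by
              ring
      calc E / (K.factorial : ℝ) * Real.exp v +
            E / (K.factorial : ℝ) * ((a / (1 - a)) * (Real.exp (2*v) - 1))
          ≤ E / (K.factorial : ℝ) * Real.exp v +
            4 * u * Real.exp (2*v) / ((k:ℝ) + 2) * (E / (K.factorial : ℝ) * Real.exp v) := by
            linarith [le_trans h5 h6]
        _ = (1 + 4 * u * Real.exp (2*v) / ((k:ℝ) + 2)) *
            (E / (K.factorial : ℝ) * Real.exp v) := by ring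
    calc η₁ ^ K / (k.factorial : ℝ) * ∑' m, F m
        ≤ η₁ ^ K / (k.factorial : ℝ) *
          ((1 + 4 * u * Real.exp (2*v) / ((k:ℝ) + 2)) * (E / (K.factorial : ℝ) * Real.exp v)) :=
          mul_le_mul_of_nonneg_left hbound (by positivity)
      _ = (1 + 4 * u * Real.exp (2*v) / ((k:ℝ) + 2)) *
          (η₁ ^ K / (k.factorial : ℝ) * (E / (K.factorial : ℝ) * Real.exp v)) := by ring

lemma dSeq_pos {C B : ℝ} (hC : 0 < C) (hB : 0 < B) (k : ℕ) : 0 < dSeq C B k := by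
  rw [dSeq]
  split
  · exact hC
  · rename_i h
    have hk : (0:ℝ) < (k:ℝ) := by exact_mod_cast Nat.pos_of_ne_zero h
    have h1 : (0:ℝ) < (k:ℝ) ^ (2*k+2) := pow_pos hk _
    positivity

lemma key_approx (lam t η₁ η₂ p q : ℝ) (hlam : 0 < lam) (ht : 0 < t) (hη₁ : 0 < η₁)
    (hη₂ : 0 < η₂) (hp : 0 < p) (hq : 0 < q) (C B : ℝ)
    (hC : C = η₁ * lam * t * p / (2 * Real.pi) *
      Real.exp (η₂ * lam * t * q / (η₁ + η₂) - lam * t))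
    (hB : B = η₁ * lam * t * p) :
    ∃ α : ℝ, 0 < α ∧ ∀ k : ℕ,
      |aCoef lam t η₁ η₂ p q k - dSeq C B k| ≤ α / ((k : ℝ) + 1) * dSeq C B k := by
  have hspos : (0:ℝ) < η₁ + η₂ := by linarith
  have hπ : (0:ℝ) < π := Real.pi_pos
  have hCpos : 0 < C := by rw [hC]; positivity
  have hBpos : 0 < B := by rw [hB]; positivity
  set u := lam * t * (η₁ / (η₁ + η₂)) * p with hudef
  set v := lam * t * (η₂ / (η₁ + η₂)) * q with hvdef
  have hupos : 0 < u := by rw [hudef]; positivity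
  have hvpos : 0 < v := by rw [hvdef]; positivity
  set cc := 4 * u * Real.exp (2 * v) with hccdef
  have hccpos : 0 < cc := by rw [hccdef]; positivity
  obtain ⟨n₀, hn₀⟩ := exists_nat_ge (4 * u)
  set N := n₀ + 1 with hNdef
  set α : ℝ := (3 + cc) +
    ∑ j ∈ Finset.range N, ((j:ℝ)+1) * |aCoef lam t η₁ η₂ p q j - dSeq C B j| / dSeq C B j
    with hαdef
  have hsum_nonneg : (0:ℝ) ≤
      ∑ j ∈ Finset.range N, ((j:ℝ)+1) * |aCoef lam t η₁ η₂ p q j - dSeq C B j| / dSeq C B j := by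
    refine Finset.sum_nonneg fun j _ => ?_
    have := dSeq_pos hCpos hBpos j
    positivity
  have hα3 : 3 + cc ≤ α := by rw [hαdef]; linarith
  have hαpos : 0 < α := by linarith
  refine ⟨α, hαpos, fun k => ?_⟩
  have hdk := dSeq_pos hCpos hBpos k
  have hk1 : (0:ℝ) < (k:ℝ) + 1 := by positivity
  rcases lt_or_ge k N with hkN | hkN
  · -- small k: absorbed in the sum
    have hterm : ((k:ℝ)+1) * |aCoef lam t η₁ η₂ p q k - dSeq C B k| / dSeq C B k ≤ α := by
      rw [hαdef]
      have h1 : ((k:ℝ)+1) * |aCoef lam t η₁ η₂ p q k - dSeq C B k| / dSeq C B k ≤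
          ∑ j ∈ Finset.range N, ((j:ℝ)+1) * |aCoef lam t η₁ η₂ p q j - dSeq C B j| / dSeq C B j :=
        Finset.single_le_sum (f := fun (j : ℕ) => ((j:ℝ)+1) *
            |aCoef lam t η₁ η₂ p q j - dSeq C B j| / dSeq C B j)
          (fun j _ => by have := dSeq_pos hCpos hBpos j; positivity)
          (Finset.mem_range.mpr hkN)
      linarith
    rw [div_le_iff₀ hdk] at hterm
    rw [div_mul_eq_mul_div, le_div_iff₀ hk1]
    calc |aCoef lam t η₁ η₂ p q k - dSeq C B k| * ((k:ℝ)+1)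
        = ((k:ℝ)+1) * |aCoef lam t η₁ η₂ p q k - dSeq C B k| := by ring
      _ ≤ α * dSeq C B k := hterm
  · -- large k
    have hk1le : 1 ≤ k := by omega
    have hkR : (1:ℝ) ≤ (k:ℝ) := by exact_mod_cast hk1le
    have hkne : k ≠ 0 := by omega
    have hn0k : (n₀:ℝ) ≤ (k:ℝ) := by exact_mod_cast (by omega : n₀ ≤ k)
    have hk4 : 4 * u ≤ (k:ℝ) + 2 := by linarith
    obtain ⟨hlo, hhi⟩ := aCoef_sandwich lam t η₁ η₂ p q hlam ht hη₁ hη₂ hp hq k hk4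
    set M := Real.exp (-(lam * t)) * Real.exp v * (η₁ * (lam * t * p)) ^ (k+1)
        / ((k.factorial : ℝ) * ((k+1).factorial : ℝ)) with hMdef
    have hMpos : 0 < M := by
      rw [hMdef]
      have h1 : (0:ℝ) < (k.factorial : ℝ) := by exact_mod_cast k.factorial_pos
      have h2 : (0:ℝ) < ((k+1).factorial : ℝ) := by exact_mod_cast (k+1).factorial_pos
      positivity
    have hBase : η₁ * (lam * t * p) = B := by rw [hB]; ring
    have hCB : 2 * π * (C * B^k) = Real.exp (-(lam*t)) * Real.exp v * B^(k+1) := by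
      rw [hC, hB]
      have hexp : Real.exp (η₂*lam*t*q/(η₁+η₂) - lam*t) = Real.exp v * Real.exp (-(lam*t)) := by
        rw [← Real.exp_add]
        congr 1
        rw [hvdef]
        ring
      rw [hexp, pow_succ]
      field_simp
    have hden : (0:ℝ) < (k.factorial : ℝ) * ((k+1).factorial : ℝ) := by
      have h1 : (0:ℝ) < (k.factorial : ℝ) := by exact_mod_cast k.factorial_pos
      have h2 : (0:ℝ) < ((k+1).factorial : ℝ) := by exact_mod_cast (k+1).factorial_pos
      positivity
    have hM : M = (C * B^k) * (2 * π / ((k.factorial : ℝ) * ((k+1).factorial : ℝ))) := by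
      rw [hMdef, hBase,
        show (C * B^k) * (2 * π / ((k.factorial : ℝ) * ((k+1).factorial : ℝ)))
          = (2 * π * (C * B^k)) / ((k.factorial : ℝ) * ((k+1).factorial : ℝ)) from by ring,
        hCB]
    have hdkeq : dSeq C B k = (C * B^k) * (Real.exp (2*(k:ℝ)) / (k:ℝ)^(2*k+2)) := by
      rw [dSeq, if_neg hkne]
      ring
    have hCBpos : (0:ℝ) < C * B^k := by positivity
    obtain ⟨hf1, hf2⟩ := fact_sandwich k hk1le
    have hMled : M ≤ dSeq C B k := by
      rw [hM, hdkeq]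
      exact mul_le_mul_of_nonneg_left hf1 hCBpos.le
    have hdleM : (1 - 3/((k:ℝ)+1)) * dSeq C B k ≤ M := by
      rw [hM, hdkeq,
        show (1 - 3/((k:ℝ)+1)) * ((C * B^k) * (Real.exp (2*(k:ℝ)) / (k:ℝ)^(2*k+2)))
          = (C * B^k) * ((1 - 3/((k:ℝ)+1)) * (Real.exp (2*(k:ℝ)) / (k:ℝ)^(2*k+2))) from by ring]
      exact mul_le_mul_of_nonneg_left hf2 hCBpos.le
    -- combine
    have hcc2 : cc / ((k:ℝ)+2) ≤ cc / ((k:ℝ)+1) :=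
      div_le_div_of_nonneg_left hccpos.le hk1 (by linarith)
    have hup : aCoef lam t η₁ η₂ p q k - dSeq C B k ≤ cc/((k:ℝ)+1) * dSeq C B k := by
      have h1 : aCoef lam t η₁ η₂ p q k ≤ (1 + cc/((k:ℝ)+2)) * M := by
        rw [hccdef]
        exact hhi
      rw [add_mul, one_mul] at h1
      have h2 : cc/((k:ℝ)+2) * M ≤ cc/((k:ℝ)+1) * dSeq C B k :=
        mul_le_mul hcc2 hMled hMpos.le (by positivity)
      linarith only [h1, h2, hMled]
    have hdown : dSeq C B k - aCoef lam t η₁ η₂ p q k ≤ 3/((k:ℝ)+1) * dSeq C B k := by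
      rw [sub_mul, one_mul] at hdleM
      linarith only [hdleM, hlo]
    have habs : |aCoef lam t η₁ η₂ p q k - dSeq C B k| ≤ (3 + cc)/((k:ℝ)+1) * dSeq C B k := by
      rw [abs_sub_le_iff]
      have hsplit1 : cc/((k:ℝ)+1) * dSeq C B k ≤ (3+cc)/((k:ℝ)+1) * dSeq C B k :=
        mul_le_mul_of_nonneg_right ((div_le_div_iff_of_pos_right hk1).mpr (by linarith)) hdk.le
      have hsplit2 : 3/((k:ℝ)+1) * dSeq C B k ≤ (3+cc)/((k:ℝ)+1) * dSeq C B k :=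
        mul_le_mul_of_nonneg_right ((div_le_div_iff_of_pos_right hk1).mpr (by linarith)) hdk.le
      exact ⟨le_trans hup hsplit1, le_trans hdown hsplit2⟩
    refine le_trans habs ?_
    exact mul_le_mul_of_nonneg_right ((div_le_div_iff_of_pos_right hk1).mpr hα3) hdk.le

lemma Qcoef_eq (η₁ η₂ p q : ℝ) (n k : ℕ) :
    Qcoef η₁ η₂ p q n k = Pcoef η₂ η₁ q p n k := by
  by_cases h : k = n
  · simp [Qcoef, Pcoef, h]
  · rw [Qcoef, if_neg h, Pcoef, if_neg h]
    refine Finset.sum_congr rfl fun i _ => ?_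
    rw [add_comm η₂ η₁]
    ring

lemma bCoef_eq (lam t η₁ η₂ p q : ℝ) (k : ℕ) :
    bCoef lam t η₁ η₂ p q k = aCoef lam t η₂ η₁ q p k := by
  rw [bCoef, aCoef]
  congr 1
  refine tsum_congr fun m => ?_
  rw [Qcoef_eq]


end KouAux

/-- Corollary on the simplified approximation of `a_k` and `b_k`.
With `C₁ = (η₁λtp/(2π)) exp{η₂λtq/(η₁+η₂) − λt}`, `B₁ = η₁λtp`,
`C₂ = (η₂λtq/(2π)) exp{η₁λtp/(η₁+η₂) − λt}`, `B₂ = η₂λtq`, and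
`d_k`, `l_k` the corresponding sequences, there exist `α₁, α₂ > 0` such that
`|a_k − d_k| ≤ (α₁/(k+1)) d_k` and `|b_k − l_k| ≤ (α₂/(k+1)) l_k` for all `k ≥ 0`. -/
theorem coefficient_simplified_approximation
    (t lam η₁ η₂ p q : ℝ)
    (ht : 0 < t) (hlam : 0 < lam) (hη₁ : 1 < η₁) (hη₂ : 0 < η₂)
    (hp : 0 < p) (hq : 0 < q) (hpq : p + q = 1)
    (C₁ B₁ C₂ B₂ : ℝ)
    (hC₁ : C₁ = η₁ * lam * t * p / (2 * Real.pi) *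
      Real.exp (η₂ * lam * t * q / (η₁ + η₂) - lam * t))
    (hB₁ : B₁ = η₁ * lam * t * p)
    (hC₂ : C₂ = η₂ * lam * t * q / (2 * Real.pi) *
      Real.exp (η₁ * lam * t * p / (η₁ + η₂) - lam * t))
    (hB₂ : B₂ = η₂ * lam * t * q) :
    ∃ α₁ : ℝ, 0 < α₁ ∧ ∃ α₂ : ℝ, 0 < α₂ ∧ ∀ k : ℕ,
      |aCoef lam t η₁ η₂ p q k - dSeq C₁ B₁ k| ≤ α₁ / ((k : ℝ) + 1) * dSeq C₁ B₁ k ∧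
      |bCoef lam t η₁ η₂ p q k - dSeq C₂ B₂ k| ≤ α₂ / ((k : ℝ) + 1) * dSeq C₂ B₂ k := by
  have hη₁' : 0 < η₁ := by linarith
  obtain ⟨α₁, hα₁, h₁⟩ :=
    key_approx lam t η₁ η₂ p q hlam ht hη₁' hη₂ hp hq C₁ B₁ hC₁ hB₁
  obtain ⟨α₂, hα₂, h₂⟩ :=
    key_approx lam t η₂ η₁ q p hlam ht hη₂ hη₁' hq hp C₂ B₂
      (by rw [hC₂, add_comm η₂ η₁]) hB₂
  exact ⟨α₁, hα₁, α₂, hα₂, fun k => ⟨h₁ k, by rw [bCoef_eq]; exact h₂ k⟩⟩
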